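/- arXiv:0908.1472 — 7 statements merged into one kernel-verified Lean document; each statement's English description precedes it below -/
import Mathlib

section
/- If G is a finite semiabelian group, then G = AH for some abelian normal subgroup A of G and some proper semiabelian subgroup H of G, unless G is trivial. -/
open scoped Pointwise

/-- The minimal family of finite groups containing the trivial group, closed under
semidirect products with finite abelian groups, and closed under quotients
(equivalently, surjective homomorphic images). -/
inductive IsSemiabelian : ∀ (G : Type) [Group G], Prop where
  | triv : IsSemiabelian PUnit
  | sdp {A H : Type} [CommGroup A] [Group H] [Finite A] [Finite H]
      (φ : H →* MulAut A) (hH : IsSemiabelian H) : IsSemiabelian (A ⋊[φ] H)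
  | quot {G₁ G₂ : Type} [Group G₁] [Group G₂] [Finite G₁] (f : G₁ →* G₂)
      (hf : Function.Surjective f) (hG : IsSemiabelian G₁) : IsSemiabelian G₂

def HasSemiabelianDecomposition (G : Type) [Group G] : Prop :=
  ∃ A H : Subgroup G, A.Normal ∧ IsMulCommutative A ∧ H ≠ ⊤ ∧ IsSemiabelian H ∧
    (A : Set G) * (H : Set G) = Set.univ

theorem IsSemiabelian.range {H K : Type} [Group H] [Group K] [Finite H]
    (hH : IsSemiabelian H) (f : H →* K) : IsSemiabelian f.range :=
  .quot f.rangeRestrict f.rangeRestrict_surjective hH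

namespace SemidirectProduct

variable {N H K : Type} [Group N] [Group H] [Group K] {φ : H →* MulAut N}
  {f : N ⋊[φ] H →* K}

theorem normal_range_comp_inl (hf : Function.Surjective f) : (f.comp inl).range.Normal := by
  rw [MonoidHom.range_comp, range_inl_eq_ker_rightHom]
  exact .map inferInstance f hf

theorem range_comp_inl_mul_range_comp_inr (hf : Function.Surjective f) :
    ((f.comp inl).range : Set K) * ((f.comp inr).range : Set K) = Set.univ := by
  refine Set.eq_univ_of_forall fun g => ?_
  obtain ⟨x, rfl⟩ := hf g
  rw [← inl_left_mul_inr_right x, map_mul]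
  exact Set.mul_mem_mul ⟨x.left, rfl⟩ ⟨x.right, rfl⟩

end SemidirectProduct

/-- The statement is proved for every nontrivial image of a semiabelian group, so that the
induction passes through the quotient rule. In the semidirect-product case `A ⋊ H ↠ K`, either
the image of `H` is all of `K`, and the induction hypothesis applies to `H ↠ K`, or the images
of `A` and `H` give the decomposition. -/
theorem IsSemiabelian.hasSemiabelianDecomposition_of_surjective {G K : Type} [Group G]
    [Group K] (hG : IsSemiabelian G) (f : G →* K) (hf : Function.Surjective f)
    (hK : Nontrivial K) : HasSemiabelianDecomposition K := by
  induction hG with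
  | triv => exact absurd hf.subsingleton (not_subsingleton_iff_nontrivial.mpr hK)
  | sdp _ hH ih =>
    by_cases htop : (f.comp SemidirectProduct.inr).range = ⊤
    · exact ih _ (MonoidHom.range_eq_top.mp htop)
    · exact ⟨_, _, SemidirectProduct.normal_range_comp_inl hf, inferInstance, htop,
        hH.range _, SemidirectProduct.range_comp_inl_mul_range_comp_inr hf⟩
  | quot g hg _ ih => exact ih (f.comp g) (hf.comp hg)

theorem semiabelian_decomposition_general (G : Type) [Group G]
    (hG : IsSemiabelian G) (hnt : Nontrivial G) :
    ∃ A H : Subgroup G, A.Normal ∧ IsMulCommutative A ∧ H ≠ ⊤ ∧ IsSemiabelian H ∧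
      (A : Set G) * (H : Set G) = Set.univ :=
  hG.hasSemiabelianDecomposition_of_surjective (.id G) Function.surjective_id hnt

theorem semiabelian_decomposition (G : Type) [Group G] [Finite G]
    (hG : IsSemiabelian G) (hnt : Nontrivial G) :
    ∃ A H : Subgroup G, A.Normal ∧ IsMulCommutative A ∧ H ≠ ⊤ ∧ IsSemiabelian H ∧
      (A : Set G) * (H : Set G) = Set.univ :=
  semiabelian_decomposition_general G hG hnt
end

section
/- A finite group G is semiabelian if and only if there exists a sequence of finite groups H_1, ..., H_n with H_1 = {1}, H_n = G, and for each i, H_{i+1} = A_i H_i where A_i is a normal abelian subgroup of H_{i+1} and H_i is a proper subgroup of H_{i+1}. -/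
open scoped Pointwise

namespace Relation

theorem reflTransGen_iff_exists_fin_chain {α : Type*} {r : α → α → Prop} {a b : α} :
    ReflTransGen r a b ↔ ∃ (n : ℕ) (f : Fin (n + 1) → α),
      f 0 = a ∧ f (Fin.last n) = b ∧ ∀ i : Fin n, r (f i.castSucc) (f i.succ) := by
  constructor
  · intro h
    induction h with
    | refl => exact ⟨0, fun _ => a, rfl, rfl, Fin.elim0⟩
    | @tail c d _ hcd ih =>
      obtain ⟨n, f, hf0, hlast, hf⟩ := ih
      refine ⟨n + 1, Fin.snoc f d, ?_, Fin.snoc_last _ _, fun i => ?_⟩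
      · rw [← Fin.castSucc_zero, Fin.snoc_castSucc, hf0]
      cases i using Fin.lastCases with
      | last => rwa [Fin.succ_last, Fin.snoc_last, Fin.snoc_castSucc, hlast]
      | cast j => rw [Fin.succ_castSucc, Fin.snoc_castSucc, Fin.snoc_castSucc]; exact hf j
  · rintro ⟨n, f, rfl, rfl, hf⟩
    suffices ∀ i : Fin (n + 1), ReflTransGen r (f 0) (f i) from this _
    intro i
    induction i using Fin.induction with
    | zero => rfl
    | succ j ih => exact ih.tail (hf j)

end Relation

open Relation

namespace Subgroup

variable {G G' : Type*} [Group G] [Group G']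

def IsAbelianStep (B K : Subgroup G) : Prop :=
  B < K ∧ ∃ A : Subgroup G, A ≤ K ∧ IsMulCommutative A ∧
    (∀ g ∈ K, ∀ a ∈ A, g * a * g⁻¹ ∈ A) ∧ (A : Set G) * (B : Set G) = (K : Set G)

theorem reflTransGen_isAbelianStep_of_mul_eq {A B K : Subgroup G} (hAK : A ≤ K)
    (hA : IsMulCommutative A) (hnorm : ∀ g ∈ K, ∀ a ∈ A, g * a * g⁻¹ ∈ A)
    (hmul : (A : Set G) * (B : Set G) = (K : Set G)) : ReflTransGen IsAbelianStep B K := by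
  have hBK : B ≤ K := fun b hb => by
    rw [← SetLike.mem_coe, ← hmul]
    exact ⟨1, one_mem A, b, hb, one_mul b⟩
  obtain rfl | hlt := hBK.eq_or_lt
  · rfl
  · exact .single ⟨hlt, A, hAK, hA, hnorm, hmul⟩

theorem reflTransGen_isAbelianStep_map (f : G →* G') {B K : Subgroup G}
    (h : ReflTransGen IsAbelianStep B K) : ReflTransGen IsAbelianStep (B.map f) (K.map f) := by
  refine ReflTransGen.lift' (map f) (fun B K ⟨_, A, hAK, hA, hnorm, hmul⟩ => ?_) _ _ h
  refine reflTransGen_isAbelianStep_of_mul_eq (A := A.map f) (map_mono hAK) inferInstance ?_ ?_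
  · rintro _ ⟨k, hk, rfl⟩ _ ⟨a, ha, rfl⟩
    exact ⟨k * a * k⁻¹, hnorm k hk a ha, by simp⟩
  · simp only [coe_map, ← Set.image_mul, hmul]

end Subgroup

theorem Subgroup.IsAbelianStep.isSemiabelian {G : Type} [Group G] [Finite G]
    {B K : Subgroup G} (h : IsAbelianStep B K) (hB : IsSemiabelian B) : IsSemiabelian K := by
  obtain ⟨hBK, A, hAK, hA, hnorm, hmul⟩ := h
  have hBA : B ≤ normalizer (A : Set G) :=
    hBK.le.trans <| (normal_subgroupOf_iff_le_normalizer hAK).mp <|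
      (normal_subgroupOf_iff hAK).mpr fun a g ha hg => hnorm g hg a ha
  let f := SemidirectProduct.monoidHomSubgroup hBA
  have hrange : f.range = K := by
    ext k
    constructor
    · rintro ⟨x, rfl⟩
      exact mul_mem (hAK x.left.2) (hBK.le x.right.2)
    · intro hk
      obtain ⟨a, ha, b, hb, rfl⟩ : k ∈ (A : Set G) * (B : Set G) := hmul ▸ hk
      exact ⟨⟨⟨a, ha⟩, ⟨b, hb⟩⟩, rfl⟩
  let _ : CommGroup A := { mul_comm := hA.is_comm.comm }
  have : Finite (A ⋊[A.normalizerMonoidHom.comp (inclusion hBA)] B) :=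
    .of_equiv _ SemidirectProduct.equivProd.symm
  exact .quot ((MulEquiv.subgroupCongr hrange).toMonoidHom.comp f.rangeRestrict)
    ((MulEquiv.subgroupCongr hrange).surjective.comp f.rangeRestrict_surjective)
    (.sdp _ hB)

theorem SemidirectProduct.reflTransGen_isAbelianStep_range_inr_top {N H : Type*} [CommGroup N]
    [Group H] {φ : H →* MulAut N} :
    ReflTransGen Subgroup.IsAbelianStep (inr : H →* N ⋊[φ] H).range ⊤ := by
  have : (inl : N →* N ⋊[φ] H).range.Normal := by
    rw [range_inl_eq_ker_rightHom]
    infer_instance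
  refine Subgroup.reflTransGen_isAbelianStep_of_mul_eq le_top inferInstance
    (fun g _ a ha => this.conj_mem a ha g) ?_
  refine Set.eq_univ_of_forall fun x => ?_
  exact ⟨inl x.left, ⟨x.left, rfl⟩, inr x.right, ⟨x.right, rfl⟩, inl_left_mul_inr_right x⟩

theorem IsSemiabelian.of_subsingleton (G : Type) [Group G] [Subsingleton G] :
    IsSemiabelian G :=
  .quot (1 : PUnit →* G) (fun _ => ⟨.unit, Subsingleton.elim _ _⟩) .triv

theorem IsSemiabelian.of_mulEquiv {G G' : Type} [Group G] [Group G'] [Finite G] (e : G ≃* G')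
    (h : IsSemiabelian G) : IsSemiabelian G' :=
  .quot e.toMonoidHom e.surjective h

theorem IsSemiabelian.reflTransGen_bot_top {G : Type} [Group G] (h : IsSemiabelian G) :
    ReflTransGen Subgroup.IsAbelianStep (⊥ : Subgroup G) ⊤ := by
  induction h with
  | triv => rw [Subsingleton.elim (⊤ : Subgroup PUnit) ⊥]
  | sdp φ _ ih =>
    have := Subgroup.reflTransGen_isAbelianStep_map (SemidirectProduct.inr (φ := φ)) ih
    rw [Subgroup.map_bot, ← MonoidHom.range_eq_map] at this
    exact this.trans SemidirectProduct.reflTransGen_isAbelianStep_range_inr_top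
  | quot f hf _ ih =>
    have := Subgroup.reflTransGen_isAbelianStep_map f ih
    rwa [Subgroup.map_bot, ← MonoidHom.range_eq_map, MonoidHom.range_eq_top.mpr hf] at this

theorem IsSemiabelian.of_reflTransGen_bot {G : Type} [Group G] [Finite G] {K : Subgroup G}
    (h : ReflTransGen Subgroup.IsAbelianStep ⊥ K) : IsSemiabelian K := by
  induction h with
  | refl => exact .of_subsingleton _
  | tail _ hstep ih => exact hstep.isSemiabelian ih

theorem semiabelian_iff_sequence (G : Type) [Group G] [Finite G] :
    IsSemiabelian G ↔
      ∃ (n : ℕ) (H : Fin (n + 1) → Subgroup G),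
        H 0 = ⊥ ∧ H (Fin.last n) = ⊤ ∧
        ∀ i : Fin n,
          H i.castSucc < H i.succ ∧
          ∃ A : Subgroup G, A ≤ H i.succ ∧ IsMulCommutative A ∧
            (∀ g ∈ H i.succ, ∀ a ∈ A, g * a * g⁻¹ ∈ A) ∧
            (A : Set G) * (H i.castSucc : Set G) = (H i.succ : Set G) := by
  constructor
  · exact fun h => reflTransGen_iff_exists_fin_chain.mp h.reflTransGen_bot_top
  · intro h
    have hK : IsSemiabelian (⊤ : Subgroup G) :=
      .of_reflTransGen_bot (reflTransGen_iff_exists_fin_chain.mpr h)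
    exact hK.of_mulEquiv Subgroup.topEquiv
end

section
/- Every p-group that is semiabelian (as a finite group) is a semiabelian p-group, i.e., S ∩ P = S_p. -/
open scoped Pointwise

/-- The minimal family of finite p-groups containing the trivial group, closed under
semidirect products with abelian p-groups, and closed under quotients. -/
inductive IsSemiabelianP (p : ℕ) : ∀ (G : Type) [Group G], Prop where
  | triv : IsSemiabelianP p PUnit
  | sdp {A H : Type} [CommGroup A] [Group H] [Finite A] [Finite H]
      (hA : IsPGroup p A) (hH' : IsPGroup p H)
      (φ : H →* MulAut A) (hH : IsSemiabelianP p H) : IsSemiabelianP p (A ⋊[φ] H)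
  | quot {G₁ G₂ : Type} [Group G₁] [Group G₂] [Finite G₁] (f : G₁ →* G₂)
      (hf : Function.Surjective f) (hG : IsSemiabelianP p G₁) : IsSemiabelianP p G₂

/-!
Every `S_p`-constructor is an `S`-constructor applied to `p`-groups, and extensions of `p`-groups
are `p`-groups, so `S_p ⊆ S ∩ P`. Conversely, unwinding the construction of a semiabelian group
shows that each of its nontrivial quotients `G` is a product `A * U` of an abelian normal subgroup
`A` and a proper semiabelian subgroup `U`. If `G` is a `p`-group, then `U ∈ S_p` by induction on
the order, and `G` is a quotient of `A ⋊ U ∈ S_p`.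
-/

instance SemidirectProduct.finite {N H : Type*} [Group N] [Group H] [Finite N] [Finite H]
    (φ : H →* MulAut N) : Finite (N ⋊[φ] H) :=
  Finite.of_equiv _ SemidirectProduct.equivProd.symm

theorem SemidirectProduct.range_inl_sup_range_inr {N H : Type*} [Group N] [Group H]
    (φ : H →* MulAut N) :
    (inl : N →* N ⋊[φ] H).range ⊔ (inr : H →* N ⋊[φ] H).range = ⊤ := by
  refine eq_top_iff.mpr fun x _ => ?_
  rw [← inl_left_mul_inr_right x]
  exact mul_mem (Subgroup.mem_sup_left ⟨x.left, rfl⟩)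
    (Subgroup.mem_sup_right ⟨x.right, rfl⟩)

theorem IsPGroup.semidirectProduct {p : ℕ} {N H : Type*} [Group N] [Group H]
    {φ : H →* MulAut N} (hN : IsPGroup p N) (hH : IsPGroup p H) : IsPGroup p (N ⋊[φ] H) := by
  have hker : IsPGroup p (SemidirectProduct.rightHom (φ := φ)).ker := by
    rw [← SemidirectProduct.range_inl_eq_ker_rightHom]
    exact hN.of_surjective _ (SemidirectProduct.inl (φ := φ)).rangeRestrict_surjective
  have := (hH.to_subgroup ⊤).comap_of_ker_isPGroup SemidirectProduct.rightHom hker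
  rw [Subgroup.comap_top] at this
  exact this.of_equiv Subgroup.topEquiv

namespace IsSemiabelian

/- Stated for all quotients `f` so that the induction passes through the quotient constructor;
in a semidirect product `A ⋊ H`, `U` is the image of `H` unless that image is everything. -/
theorem exists_normal_sup_eq_top {G₁ : Type} [Group G₁] (h : IsSemiabelian G₁) {G : Type}
    [Group G] [Nontrivial G] {f : G₁ →* G} (hf : Function.Surjective f) :
    ∃ A U : Subgroup G, A.Normal ∧ IsMulCommutative A ∧ IsSemiabelian U ∧ U ≠ ⊤ ∧
      A ⊔ U = ⊤ := by
  induction h generalizing G with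
  | triv =>
    exact absurd hf.subsingleton (not_subsingleton G)
  | @sdp A H _ _ _ _ φ hH ih =>
    by_cases hU : (f.comp SemidirectProduct.inr).range = ⊤
    · exact ih (MonoidHom.range_eq_top.mp hU)
    have : (SemidirectProduct.inl (φ := φ)).range.Normal := by
      rw [SemidirectProduct.range_inl_eq_ker_rightHom]; infer_instance
    refine ⟨(SemidirectProduct.inl (φ := φ)).range.map f, (f.comp SemidirectProduct.inr).range,
      this.map f hf, inferInstance,
      quot _ (f.comp SemidirectProduct.inr).rangeRestrict_surjective hH, hU, ?_⟩
    rw [MonoidHom.range_comp, ← Subgroup.map_sup, SemidirectProduct.range_inl_sup_range_inr,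
      ← MonoidHom.range_eq_map, MonoidHom.range_eq_top.mpr hf]
  | quot g hg _ ih => exact ih (f := f.comp g) (hf.comp hg)

end IsSemiabelian

namespace IsSemiabelianP

variable {p : ℕ}

theorem isSemiabelian {G : Type} [Group G] (h : IsSemiabelianP p G) : IsSemiabelian G := by
  induction h with
  | triv => exact .triv
  | sdp _ _ φ _ ih => exact .sdp φ ih
  | quot f hf _ ih => exact .quot f hf ih

theorem isPGroup {G : Type} [Group G] (h : IsSemiabelianP p G) : IsPGroup p G := by
  induction h with
  | triv => exact .of_subsingleton p _
  | sdp hA hH _ _ _ => exact hA.semidirectProduct hH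
  | quot f hf _ ih => exact ih.of_surjective f hf

open scoped IsMulCommutative in
theorem of_normal_sup_eq_top {G : Type} [Group G] [Finite G] (hG : IsPGroup p G)
    {A U : Subgroup G} [A.Normal] [IsMulCommutative A] (hU : IsSemiabelianP p U)
    (hAU : A ⊔ U = ⊤) : IsSemiabelianP p G := by
  refine quot (SemidirectProduct.monoidHomSubgroup (H := A) (K := U)
    (A.normalizer_eq_top ▸ le_top)) (fun g => ?_) (sdp (hG.to_subgroup A) (hG.to_subgroup U) _ hU)
  have hg : g ∈ ((A ⊔ U : Subgroup G) : Set G) := hAU ▸ Subgroup.mem_top g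
  obtain ⟨a, ha, u, hu, rfl⟩ := (Subgroup.normal_mul A U ▸ hg :)
  exact ⟨SemidirectProduct.inl ⟨a, ha⟩ * SemidirectProduct.inr ⟨u, hu⟩, by simp⟩

end IsSemiabelianP

theorem IsSemiabelian.isSemiabelianP {p : ℕ} {G : Type} [Group G] [Finite G]
    (h : IsSemiabelian G) (hG : IsPGroup p G) : IsSemiabelianP p G := by
  induction hn : Nat.card G using Nat.strong_induction_on generalizing G with
  | _ n ih =>
    rcases subsingleton_or_nontrivial G with _ | _
    · exact .quot (1 : PUnit →* G) (fun g => ⟨.unit, Subsingleton.elim _ _⟩) .triv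
    obtain ⟨A, U, _, _, hU, hUG, hAU⟩ :=
      h.exists_normal_sup_eq_top (f := .id G) Function.surjective_id
    have hUcard : Nat.card U < n :=
      hn ▸ U.card_le_card_group.lt_of_ne (mt U.eq_top_of_card_eq hUG)
    exact .of_normal_sup_eq_top hG (ih _ hUcard hU (hG.to_subgroup U) rfl) hAU

theorem semiabelian_and_pGroup_iff_semiabelianP_general (p : ℕ)
    (G : Type) [Group G] [Finite G] :
    (IsSemiabelian G ∧ IsPGroup p G) ↔ IsSemiabelianP p G :=
  ⟨fun ⟨hS, hP⟩ => hS.isSemiabelianP hP, fun h => ⟨h.isSemiabelian, h.isPGroup⟩⟩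

/-- `S ∩ P = S_p`: a finite group is a semiabelian `p`-group iff it is
semiabelian and a `p`-group. -/
theorem semiabelian_and_pGroup_iff_semiabelianP (p : ℕ) [Fact p.Prime]
    (G : Type) [Group G] [Finite G] :
    (IsSemiabelian G ∧ IsPGroup p G) ↔ IsSemiabelianP p G :=
  semiabelian_and_pGroup_iff_semiabelianP_general p G
end

section
/- Let G be a finite p-group with a decomposition G = AH where A is an abelian normal subgroup of G and H is a subgroup of G. Then the Frattini subgroup satisfies Φ(G) = A^p[A,H]Φ(H), where [A,H] is the subgroup generated by commutators [a,h] with a ∈ A, h ∈ H. -/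
open scoped Pointwise
open scoped commutatorElement

/-- `A^p[A,H]`: the subgroup generated by `p`-th powers of elements of `A`
together with commutators `[a,h]` for `a ∈ A`, `h ∈ H`. -/
def pPowComm (p : ℕ) {G : Type} [Group G] (A H : Subgroup G) : Subgroup G :=
  Subgroup.closure ({x | ∃ a ∈ A, x = a ^ p} ∪ {x | ∃ a ∈ A, ∃ h ∈ H, x = ⁅a, h⁆})

/-!
For a finite `p`-group, `Φ(G) = G^p[G,G] = pPowComm p ⊤ ⊤`: a maximal subgroup is normal with
quotient simple and nilpotent, hence of order `p`; conversely `G ⧸ G^p[G,G]` is an `𝔽_p`-vector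
space, in which every nonzero vector avoids the kernel of some linear functional.

It therefore suffices to show `G^p[G,G] = N ⊔ H^p[H,H]` for `N = A^p[A,H]`. Since `A` is abelian
and `G = AH`, `N` is normal and contains `[A,G]`, so modulo `N` the elements of `A` are central
of exponent `p`. Hence `(ah)^p ≡ h^p` and `[a₁h₁, a₂h₂] ≡ [h₁,h₂]` modulo `N`. Finally, `N` being
normal, `N ⊔ Φ(H)` is the product set `N Φ(H)`.
-/

open Subgroup

section Central

variable {Q : Type*} [Group Q] {c d : Q}

lemma commutatorElement_mul_left_of_mem_center (hc : c ∈ center Q) (u w : Q) :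
    ⁅c * u, w⁆ = ⁅u, w⁆ := by
  rw [commutatorElement_mul_left_eq_conj_mul,
    commutatorElement_eq_one_iff_commute.mpr (mem_center_iff.mp hc w).symm, mul_one,
    (mem_center_iff.mp hc _).symm, mul_inv_cancel_right]

lemma commutatorElement_mul_right_of_mem_center (hd : d ∈ center Q) (u v : Q) :
    ⁅u, d * v⁆ = ⁅u, v⁆ := by
  rw [← commutatorElement_inv, commutatorElement_mul_left_of_mem_center hd, commutatorElement_inv]

end Central

namespace QuotientGroup

variable {G : Type*} [Group G] {N : Subgroup G}

@[simp]
lemma mk_commutatorElement [N.Normal] (g h : G) :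
    ((⁅g, h⁆ : G) : G ⧸ N) = ⁅(g : G ⧸ N), (h : G ⧸ N)⁆ :=
  map_commutatorElement (mk' N) g h

lemma mk_mem_center_of_forall_commutatorElement_mem [N.Normal] {a : G} (ha : ∀ g, ⁅a, g⁆ ∈ N) :
    (a : G ⧸ N) ∈ center (G ⧸ N) := by
  refine mem_center_iff.mpr fun y => ?_
  induction y using QuotientGroup.induction_on with
  | H g =>
    rw [eq_comm, ← commutatorElement_eq_one_iff_mul_comm, ← mk_commutatorElement, eq_one_iff]
    exact ha g

lemma mem_sup_of_mk_eq {K : Subgroup G} {x y : G} (hy : y ∈ K) (hxy : (x : G ⧸ N) = y) :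
    x ∈ N ⊔ K := by
  rw [sup_comm, ← mul_inv_cancel_left y x]
  exact mul_mem_sup hy (QuotientGroup.eq.mp hxy.symm)

lemma isSimpleGroup_of_isCoatom [N.Normal] (hN : IsCoatom N) : IsSimpleGroup (G ⧸ N) := by
  have : IsSimpleOrder (Subgroup (G ⧸ N)) :=
    (OrderIso.isSimpleOrder_iff (β := Set.Ici N) (comapMk'OrderIso N)).mpr
      (Set.isSimpleOrder_Ici_iff_isCoatom.mpr hN)
  have : Nontrivial (G ⧸ N) := nontrivial_iff.mp inferInstance
  exact ⟨fun K _ => eq_bot_or_eq_top K⟩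

end QuotientGroup

lemma frattini_eq_bot_of_pow_eq_one {p : ℕ} [Fact p.Prime] {Q : Type*} [CommGroup Q]
    (hQ : ∀ x : Q, x ^ p = 1) : frattini Q = ⊥ := by
  refine eq_bot_iff.mpr fun x hx => mem_bot.mpr ?_
  by_contra hx1
  have : Module (ZMod p) (Additive Q) := AddCommGroup.zmodModule fun a => hQ a.toMul
  obtain ⟨f, hf⟩ : ∃ f : Additive Q →ₗ[ZMod p] ZMod p, f (Additive.ofMul x) ≠ 0 := by
    by_contra! h
    exact hx1 ((Module.forall_dual_apply_eq_zero_iff (ZMod p) _).mp h)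
  have hker : IsCoatom (LinearMap.ker f) :=
    LinearMap.isCoatom_ker_of_surjective
      (LinearMap.surjective_of_ne_zero fun h0 => hf (by simp [h0]))
  let M : Subgroup Q := toAddSubgroup.symm ((AddSubgroup.toZModSubmodule p).symm (LinearMap.ker f))
  have hM : IsCoatom M := by
    rwa [OrderIso.isCoatom_iff, OrderIso.isCoatom_iff]
  exact hf (frattini_le_coatom hM hx)

section PPowComm

variable {p : ℕ} {G G' : Type} [Group G] [Group G']

lemma pPowComm_mono {A A' H H' : Subgroup G} (hA : A ≤ A') (hH : H ≤ H') :
    pPowComm p A H ≤ pPowComm p A' H' := by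
  refine closure_mono (Set.union_subset_union ?_ ?_)
  · rintro x ⟨a, ha, rfl⟩
    exact ⟨a, hA ha, rfl⟩
  · rintro x ⟨a, ha, h, hh, rfl⟩
    exact ⟨a, hA ha, h, hH hh, rfl⟩

lemma map_pPowComm (f : G →* G') (A H : Subgroup G) :
    (pPowComm p A H).map f = pPowComm p (A.map f) (H.map f) := by
  rw [pPowComm, pPowComm, MonoidHom.map_closure, Set.image_union]
  congr 2
  · ext x
    simp [eq_comm]
  · ext x
    simp [eq_comm, and_assoc]

lemma pPowComm_le_left (A H : Subgroup G) [A.Normal] : pPowComm p A H ≤ A := by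
  refine (closure_le _).mpr ?_
  rintro x (⟨a, ha, rfl⟩ | ⟨a, ha, h, -, rfl⟩)
  · exact pow_mem ha p
  · exact commutator_le_left A ⊤ (commutator_mem_commutator ha (mem_top h))

lemma mem_normalizer_pPowComm {A H : Subgroup G} {g : G} (hgA : g ∈ normalizer (A : Set G))
    (hgH : g ∈ normalizer (H : Set G)) : g ∈ normalizer (pPowComm p A H : Set G) := by
  rw [mem_normalizer_iff_map_conj_eq] at *
  rw [map_pPowComm, hgA, hgH]

instance pPowComm_normal (A H : Subgroup G) [A.Normal] [H.Normal] : (pPowComm p A H).Normal :=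
  normalizer_eq_top_iff.mp <| eq_top_iff.mpr fun g _ =>
    mem_normalizer_pPowComm (normalizer_eq_top (H := A) ▸ mem_top g)
      (normalizer_eq_top (H := H) ▸ mem_top g)

end PPowComm

section Frattini

variable {p : ℕ} [Fact p.Prime] {G : Type} [Group G]

lemma frattini_le_of_pPowComm_top_le {K : Subgroup G} [K.Normal] (hK : pPowComm p ⊤ ⊤ ≤ K) :
    frattini G ≤ K := by
  let : CommGroup (G ⧸ K) :=
    { mul_comm := fun x y => by
        induction x using QuotientGroup.induction_on with | H g => ?_
        induction y using QuotientGroup.induction_on with | H h => ?_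
        rw [← commutatorElement_eq_one_iff_mul_comm, ← QuotientGroup.mk_commutatorElement,
          QuotientGroup.eq_one_iff]
        exact hK (subset_closure (Or.inr ⟨g, mem_top g, h, mem_top h, rfl⟩)) }
  have hexp : ∀ x : G ⧸ K, x ^ p = 1 := fun x => by
    induction x using QuotientGroup.induction_on with | H g => ?_
    rw [← QuotientGroup.mk_pow, QuotientGroup.eq_one_iff]
    exact hK (subset_closure (Or.inl ⟨g, mem_top g, rfl⟩))
  have := frattini_le_comap_frattini_of_surjective (QuotientGroup.mk'_surjective K)
  rwa [frattini_eq_bot_of_pow_eq_one hexp, MonoidHom.comap_bot, QuotientGroup.ker_mk'] at this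

lemma IsPGroup.pPowComm_top_le_of_isCoatom [Finite G] (hG : IsPGroup p G) {M : Subgroup G}
    (hM : IsCoatom M) : pPowComm p ⊤ ⊤ ≤ M := by
  have := hG.isNilpotent
  have := Group.normalizerCondition_of_isNilpotent.normal_of_coatom M hM
  have := QuotientGroup.isSimpleGroup_of_isCoatom hM
  have := (hG.to_quotient M).isNilpotent
  have hcard : p = Nat.card (G ⧸ M) := by
    have hprime := CommGroup.is_simple_iff_prime_card.mp ‹_›
    exact (Nat.prime_dvd_prime_iff_eq Fact.out hprime).mp
      ((hG.to_quotient M).card_eq_or_dvd.resolve_left hprime.ne_one)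
  refine (closure_le _).mpr ?_
  rintro x (⟨g, -, rfl⟩ | ⟨g, -, h, -, rfl⟩)
  · rw [SetLike.mem_coe, ← QuotientGroup.eq_one_iff, QuotientGroup.mk_pow, hcard]
    exact pow_card_eq_one'
  · rw [SetLike.mem_coe, ← QuotientGroup.eq_one_iff, QuotientGroup.mk_commutatorElement,
      commutatorElement_eq_one_iff_mul_comm]
    exact mul_comm _ _

lemma IsPGroup.frattini_eq_pPowComm_top [Finite G] (hG : IsPGroup p G) :
    frattini G = pPowComm p ⊤ ⊤ :=
  le_antisymm (frattini_le_of_pPowComm_top_le le_rfl)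
    (le_iInf₂ fun _ hM => hG.pPowComm_top_le_of_isCoatom hM)

lemma IsPGroup.map_subtype_frattini {H : Subgroup G} [Finite H] (hH : IsPGroup p H) :
    (frattini H).map H.subtype = pPowComm p H H := by
  rw [hH.frattini_eq_pPowComm_top, map_pPowComm, ← MonoidHom.range_eq_map, range_subtype]

end Frattini

section Decomposition

variable (p : ℕ) {G : Type} [Group G] {A H : Subgroup G} [A.Normal]
  (hA : IsMulCommutative A) (hprod : (A : Set G) * (H : Set G) = Set.univ)
include hA hprod

lemma pPowComm_normal_of_mul_eq_univ : (pPowComm p A H).Normal := by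
  have hH : H ≤ normalizer (pPowComm p A H : Set G) := fun h hh =>
    mem_normalizer_pPowComm (normalizer_eq_top (H := A) ▸ mem_top h) (le_normalizer hh)
  refine ⟨fun n hn g => ?_⟩
  obtain ⟨a, ha, h, hh, rfl⟩ := Set.mem_mul.mp (hprod.symm ▸ Set.mem_univ g)
  have hconj : h * n * h⁻¹ ∈ pPowComm p A H := (mem_normalizer_iff.mp (hH hh) n).mp hn
  have hcomm : a * (h * n * h⁻¹) = (h * n * h⁻¹) * a :=
    setLike_mul_comm ha (pPowComm_le_left A H hconj)
  rwa [show a * h * n * (a * h)⁻¹ = a * (h * n * h⁻¹) * a⁻¹ by group, hcomm, mul_inv_cancel_right]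

lemma commutatorElement_mem_pPowComm_of_mul_eq_univ {a : G} (ha : a ∈ A) (g : G) :
    ⁅a, g⁆ ∈ pPowComm p A H := by
  have := pPowComm_normal_of_mul_eq_univ p hA hprod
  obtain ⟨a', ha', h, hh, rfl⟩ := Set.mem_mul.mp (hprod.symm ▸ Set.mem_univ g)
  rw [commutatorElement_mul_right_eq_mul_conj,
    commutatorElement_eq_one_iff_mul_comm.mpr (setLike_mul_comm ha ha'), one_mul]
  exact this.conj_mem _ (subset_closure (Or.inr ⟨a, ha, h, hh, rfl⟩)) a'

lemma pPowComm_top_eq_sup_of_mul_eq_univ :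
    pPowComm p ⊤ ⊤ = pPowComm p A H ⊔ pPowComm p H H := by
  have := pPowComm_normal_of_mul_eq_univ p hA hprod
  have hcenter : ∀ a ∈ A, (a : G ⧸ pPowComm p A H) ∈ center _ := fun a ha =>
    QuotientGroup.mk_mem_center_of_forall_commutatorElement_mem
      (commutatorElement_mem_pPowComm_of_mul_eq_univ p hA hprod ha)
  have hpow : ∀ a ∈ A, (a : G ⧸ pPowComm p A H) ^ p = 1 := fun a ha => by
    rw [← QuotientGroup.mk_pow, QuotientGroup.eq_one_iff]
    exact subset_closure (Or.inl ⟨a, ha, rfl⟩)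
  refine le_antisymm ((closure_le _).mpr ?_)
    (sup_le (pPowComm_mono le_top le_top) (pPowComm_mono le_top le_top))
  rintro x (⟨g, -, rfl⟩ | ⟨g₁, -, g₂, -, rfl⟩)
  · obtain ⟨a, ha, h, hh, rfl⟩ := Set.mem_mul.mp (hprod.symm ▸ Set.mem_univ g)
    refine QuotientGroup.mem_sup_of_mk_eq (subset_closure (Or.inl ⟨h, hh, rfl⟩)) ?_
    have hah : Commute (a : G ⧸ pPowComm p A H) h := (mem_center_iff.mp (hcenter a ha) _).symm
    rw [QuotientGroup.mk_pow, QuotientGroup.mk_mul, hah.mul_pow, hpow a ha, one_mul,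
      QuotientGroup.mk_pow]
  · obtain ⟨a₁, ha₁, h₁, hh₁, rfl⟩ := Set.mem_mul.mp (hprod.symm ▸ Set.mem_univ g₁)
    obtain ⟨a₂, ha₂, h₂, hh₂, rfl⟩ := Set.mem_mul.mp (hprod.symm ▸ Set.mem_univ g₂)
    refine QuotientGroup.mem_sup_of_mk_eq (subset_closure (Or.inr ⟨h₁, hh₁, h₂, hh₂, rfl⟩)) ?_
    rw [QuotientGroup.mk_commutatorElement, QuotientGroup.mk_mul, QuotientGroup.mk_mul,
      commutatorElement_mul_left_of_mem_center (hcenter a₁ ha₁),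
      commutatorElement_mul_right_of_mem_center (hcenter a₂ ha₂),
      QuotientGroup.mk_commutatorElement]

end Decomposition

/-- If `G = AH` is a decomposition of a finite `p`-group with `A` abelian normal, then
`Φ(G) = A^p[A,H] · Φ(H)`. -/
theorem frattini_of_decomposition (p : ℕ) [Fact p.Prime] (G : Type) [Group G] [Finite G]
    (hG : IsPGroup p G) (A H : Subgroup G) [A.Normal] (hA : IsMulCommutative A)
    (hprod : (A : Set G) * (H : Set G) = Set.univ) :
    (frattini G : Set G) =
      (pPowComm p A H : Set G) * (((frattini ↥H).map H.subtype : Subgroup G) : Set G) := by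
  have := pPowComm_normal_of_mul_eq_univ p hA hprod
  rw [hG.frattini_eq_pPowComm_top, (hG.to_subgroup H).map_subtype_frattini,
    pPowComm_top_eq_sup_of_mul_eq_univ p hA hprod, normal_mul]
end

section
/- Let G be a semiabelian p-group with a minimal decomposition G = AH. Then A ∩ H ⊆ A^p[A,H] ∩ Φ(H). -/
open scoped Pointwise commutatorElement

/-- A decomposition of `G`: an abelian normal subgroup `A` and a proper semiabelian
subgroup `H` with `G = AH`. -/
structure IsDecomposition (p : ℕ) {G : Type} [Group G] (A H : Subgroup G) : Prop where
  normal : A.Normal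
  comm : IsMulCommutative ↥A
  semi : IsSemiabelianP p ↥H
  proper : H ≠ ⊤
  prod : (A : Set G) * (H : Set G) = Set.univ

/-- A minimal decomposition of `G`: `A` is minimal among abelian normal subgroups
admitting a proper semiabelian complement, and `H` is minimal among semiabelian
subgroups with `G = AH`. -/
structure IsMinimalDecomposition (p : ℕ) {G : Type} [Group G] (A H : Subgroup G) : Prop
    extends IsDecomposition p A H where
  minA : ∀ B : Subgroup G, B < A → ¬ ∃ H' : Subgroup G, IsDecomposition p B H'
  minH : ∀ H' : Subgroup G, H' < H → ¬ (IsSemiabelianP p ↥H' ∧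
    (A : Set G) * (H' : Set G) = Set.univ)

/-!
Write `B = A^p[A,H]`. Since `A` is abelian and `G = AH`, every subgroup between `B` and `A` is
normal in `G`, and `A/B` has exponent `p`. If some `x ∈ A ∩ H` were outside `B`, a subgroup `E`
maximal among those between `B` and `A` avoiding `x` would satisfy `A = E⟨x⟩`, hence `G = EH`,
contradicting the minimality of `A`.

For the Frattini part, `H/Φ(H)` is elementary abelian. Unfolding `H` as `A₁(A₂(⋯))` with each `Aᵢ`
abelian and normalized by the later factors, choose in each `Aᵢ` a subgroup whose image in
`H/Φ(H)` complements what the image of `A ∩ H` and the earlier choices already cover. These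
generate a semiabelian `K ≤ H` with `(A ∩ H)KΦ(H) = H`, so `(A ∩ H)K = H`, and the image of `K`
meets that of `A ∩ H` trivially. If `A ∩ H ⊄ Φ(H)`, then `K` is proper and `AK = G`,
contradicting the minimality of `H`.
-/

open Subgroup

namespace Subgroup

variable {V : Type*} [Group V] {p : ℕ}

theorem mem_sup_zpowers_of_mem_sup_zpowers (hp : p.Prime) {E : Subgroup V} {d y : V}
    (hdE : d ∈ normalizer (E : Set V)) (hdp : d ^ p ∈ E) (hy : y ∈ E ⊔ zpowers d) (hyE : y ∉ E) :
    d ∈ E ⊔ zpowers y := by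
  rw [← SetLike.mem_coe, coe_mul_of_right_le_normalizer_left E _ (zpowers_le.mpr hdE)] at hy
  obtain ⟨e, he, _, ⟨k, rfl⟩, hy⟩ := hy
  have hk : IsCoprime (p : ℤ) k := by
    refine (Nat.prime_iff_prime_int.mp hp).irreducible.coprime_iff_not_dvd.mpr ?_
    rintro ⟨m, rfl⟩
    refine hyE (hy ▸ E.mul_mem he ?_)
    simpa [zpow_mul] using E.zpow_mem hdp m
  obtain ⟨u, v, huv⟩ := hk
  have hdk : d ^ k ∈ E ⊔ zpowers y := by
    rw [show d ^ k = e⁻¹ * y by rw [← hy, inv_mul_cancel_left]]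
    exact mul_mem (mem_sup_left (inv_mem he)) (mem_sup_right (mem_zpowers y))
  have hd : (d ^ p) ^ u * (d ^ k) ^ v = d := by
    rw [← zpow_natCast, ← zpow_mul, ← zpow_mul, ← zpow_add, mul_comm _ u, mul_comm k, huv,
      zpow_one]
  have := mul_mem (zpow_mem (mem_sup_left hdp) u) (zpow_mem hdk v)
  rwa [hd] at this

theorem exists_inf_eq_and_sup_eq [Finite V] (hp : p.Prime) {N F D : Subgroup V}
    [IsMulCommutative D] (hNF : N ≤ F) (hFD : F ≤ D) (hpow : ∀ d ∈ D, d ^ p ∈ N) :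
    ∃ E, N ≤ E ∧ E ≤ D ∧ E ⊓ F = N ∧ E ⊔ F = D := by
  obtain ⟨E, ⟨hNE, hED, hEF⟩, hmax⟩ :=
    (Set.toFinite {E : Subgroup V | N ≤ E ∧ E ≤ D ∧ E ⊓ F = N}).exists_maximal
      ⟨N, le_rfl, hNF.trans hFD, inf_eq_left.mpr hNF⟩
  refine ⟨E, hNE, hED, hEF, le_antisymm (sup_le hED hFD) fun d hd => ?_⟩
  by_contra hdEF
  have hlt : E < E ⊔ zpowers d :=
    lt_of_le_of_ne le_sup_left fun h => hdEF (mem_sup_left (h ▸ mem_sup_right (mem_zpowers d)))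
  obtain ⟨y, ⟨hyEd, hyF⟩, hyN⟩ : ∃ y ∈ (E ⊔ zpowers d) ⊓ F, y ∉ N := by
    by_contra! h
    refine hlt.not_ge (hmax ⟨hNE.trans le_sup_left, sup_le hED (zpowers_le.mpr hd), ?_⟩ hlt.le)
    exact le_antisymm h (le_inf (hNE.trans le_sup_left) hNF)
  have hyE : y ∉ E := fun h => hyN (hEF ▸ ⟨h, hyF⟩)
  have hdE : d ∈ normalizer (E : Set V) :=
    centralizer_le_normalizer _ (centralizer_le hED (le_centralizer D hd))
  exact hdEF (sup_le_sup_left (zpowers_le.mpr hyF) E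
    (mem_sup_zpowers_of_mem_sup_zpowers hp hdE (hNE (hpow d hd)) hyEd hyE))

end Subgroup

theorem QuotientGroup.isSimpleOrder_subgroup_of_isCoatom {X : Type*} [Group X] {M : Subgroup X}
    [M.Normal] (hM : IsCoatom M) : IsSimpleOrder (Subgroup (X ⧸ M)) := by
  have : Nontrivial (X ⧸ M) := QuotientGroup.nontrivial_iff.mpr hM.1
  refine ⟨fun S => ?_⟩
  have hS := map_comap_eq_self_of_surjective (QuotientGroup.mk'_surjective M) S
  rcases hM.le_iff.mp (QuotientGroup.le_comap_mk' M S) with h | h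
  · rw [h, map_top_of_surjective _ (QuotientGroup.mk'_surjective M)] at hS
    exact Or.inr hS.symm
  · rw [h, QuotientGroup.map_mk'_self] at hS
    exact Or.inl hS.symm

namespace IsPGroup

variable {p : ℕ} [Fact p.Prime]

section SimpleOrder

variable {Q : Type*} [Group Q] [Finite Q] [IsSimpleOrder (Subgroup Q)]

theorem isMulCommutative_of_isSimpleOrder (hQ : IsPGroup p Q) : IsMulCommutative Q :=
  have : Nontrivial Q := nontrivial_iff.mp inferInstance
  center_eq_top_iff.mp ((IsSimpleOrder.eq_bot_or_eq_top _).resolve_left hQ.bot_lt_center.ne')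

theorem pow_eq_one_of_isSimpleOrder (hQ : IsPGroup p Q) (q : Q) : q ^ p = 1 := by
  have : Nontrivial Q := nontrivial_iff.mp inferInstance
  obtain ⟨g, hg⟩ := exists_prime_orderOf_dvd_card' p
    (hQ.card_eq_or_dvd.resolve_left Finite.one_lt_card.ne')
  have hg1 : g ≠ 1 := fun h => (Fact.out : p.Prime).one_lt.ne' (by rw [← hg, h, orderOf_one])
  have hgen : zpowers g = ⊤ :=
    (IsSimpleOrder.eq_bot_or_eq_top _).resolve_left (zpowers_ne_bot.mpr hg1)
  obtain ⟨k, rfl⟩ := mem_zpowers_iff.mp (hgen ▸ mem_top q)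
  rw [← zpow_natCast, ← zpow_mul, mul_comm, zpow_mul, zpow_natCast, ← hg, pow_orderOf_eq_one,
    one_zpow]

end SimpleOrder

variable {X : Type*} [Group X] [Finite X]

theorem normal_of_isCoatom (hX : IsPGroup p X) {M : Subgroup X} (hM : IsCoatom M) : M.Normal :=
  have := hX.isNilpotent
  Group.normalizerCondition_of_isNilpotent.normal_of_coatom M hM

theorem commutator_le_frattini (hX : IsPGroup p X) : commutator X ≤ frattini X := by
  simp only [frattini, Order.radical, le_iInf_iff]
  intro M hM
  have := hX.normal_of_isCoatom hM
  have := QuotientGroup.isSimpleOrder_subgroup_of_isCoatom hM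
  exact Normal.quotient_commutative_iff_commutator_le.mp
    (hX.to_quotient M).isMulCommutative_of_isSimpleOrder

theorem pow_mem_frattini (hX : IsPGroup p X) (a : X) : a ^ p ∈ frattini X := by
  simp only [frattini, Order.radical, mem_iInf]
  intro M hM
  have := hX.normal_of_isCoatom hM
  have := QuotientGroup.isSimpleOrder_subgroup_of_isCoatom hM
  rw [← QuotientGroup.eq_one_iff, QuotientGroup.mk_pow]
  exact (hX.to_quotient M).pow_eq_one_of_isSimpleOrder _

end IsPGroup

namespace Subgroup

/-- Internal counterpart of `IsSemiabelianP`, which can be recursed on inside a fixed ambient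
group. -/
inductive IsInternallySemiabelian {X : Type*} [Group X] : Subgroup X → Prop
  | bot : IsInternallySemiabelian ⊥
  | sup {A K : Subgroup X} [IsMulCommutative A] (hK : K ≤ normalizer (A : Set X)) :
      IsInternallySemiabelian K → IsInternallySemiabelian (A ⊔ K)

namespace IsInternallySemiabelian

variable {X : Type*} [Group X]

theorem map {Y : Type*} [Group Y] (f : X →* Y) {H : Subgroup X} (hH : H.IsInternallySemiabelian) :
    (H.map f).IsInternallySemiabelian := by
  induction hH with
  | bot => rw [map_bot]; exact .bot
  | @sup A K _ hK _ ih =>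
    rw [map_sup]
    exact .sup ((map_mono hK).trans (le_normalizer_map f)) ih

theorem exists_le_disjoint_map {Q : Type*} [CommGroup Q] [Finite Q] {p : ℕ} (hp : p.Prime)
    (hQ : ∀ q : Q, q ^ p = 1) (π : X →* Q) {H : Subgroup X} (hH : H.IsInternallySemiabelian)
    (S : Subgroup Q) :
    ∃ K ≤ H, K.IsInternallySemiabelian ∧ H.map π ≤ S ⊔ K.map π ∧ Disjoint (K.map π) S := by
  induction hH generalizing S with
  | bot => exact ⟨⊥, le_rfl, .bot, by simp, by simp⟩
  | @sup A K₀ _ hK₀ _ ih =>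
    obtain ⟨E, -, hEA, hES, hEA'⟩ := exists_inf_eq_and_sup_eq hp bot_le
      (inf_le_left : A.map π ⊓ S ≤ A.map π) fun q _ => by rw [hQ q]; exact one_mem _
    obtain ⟨K₁, hK₁, hK₁int, hcov, hdisj⟩ := ih (S ⊔ E)
    let D := A ⊓ E.comap π
    have hD : D.map π = E := by
      refine SetLike.coe_injective ?_
      rw [coe_map, coe_inf, coe_comap, Set.image_inter_preimage, ← coe_map, ← coe_inf,
        inf_eq_right.mpr hEA]
    have : IsMulCommutative D :=
      .of_setLike_mul_comm fun a ha b hb => setLike_mul_comm ha.1 hb.1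
    have hDnorm : K₀ ≤ normalizer (D : Set X) := by
      refine (le_inf hK₀ ?_).trans inf_normalizer_le_normalizer_inf
      rw [normalizer_eq_top]
      exact le_top
    refine ⟨D ⊔ K₁, sup_le_sup inf_le_left hK₁, .sup (hK₁.trans hDnorm) hK₁int, ?_, ?_⟩
    · rw [map_sup, map_sup, hD]
      refine sup_le ?_ (hcov.trans (sup_assoc _ _ _).le)
      rw [← hEA']
      exact sup_le (le_sup_of_le_right le_sup_left) (le_sup_of_le_left inf_le_right)
    · have hSE : Disjoint S E := by
        rw [disjoint_iff, inf_comm, ← hES, ← inf_assoc, inf_eq_left.mpr hEA]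
      rw [map_sup, hD]
      exact (hSE.disjoint_sup_right_of_disjoint_sup_left hdisj.symm).symm

end IsInternallySemiabelian

end Subgroup

namespace IsSemiabelianP

variable {p : ℕ} {X : Type} [Group X]

theorem isPGroup_s6 [Fact p.Prime] (h : IsSemiabelianP p X) : IsPGroup p X := by
  induction h with
  | triv => exact .of_subsingleton p PUnit
  | @sdp A H _ _ _ _ hA hH _ _ _ =>
    obtain ⟨m, hm⟩ := IsPGroup.iff_card.mp hA
    obtain ⟨n, hn⟩ := IsPGroup.iff_card.mp hH
    exact .of_card (n := m + n) (by rw [SemidirectProduct.card, hm, hn, pow_add])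
  | quot f hf _ ih => exact ih.of_surjective f hf

theorem isInternallySemiabelian_top (h : IsSemiabelianP p X) :
    (⊤ : Subgroup X).IsInternallySemiabelian := by
  induction h with
  | triv => rw [Subsingleton.elim (⊤ : Subgroup PUnit) ⊥]; exact .bot
  | @sdp A H _ _ _ _ _ _ φ _ ih =>
    let N := (SemidirectProduct.inl : A →* A ⋊[φ] H).range
    have : IsMulCommutative N :=
      .of_setLike_mul_comm <| by rintro _ ⟨a, rfl⟩ _ ⟨b, rfl⟩; rw [← map_mul, mul_comm, map_mul]
    have hsup : N ⊔ (⊤ : Subgroup H).map SemidirectProduct.inr = ⊤ := by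
      refine eq_top_iff.mpr fun x _ => ?_
      rw [← SemidirectProduct.inl_left_mul_inr_right x]
      exact mul_mem (mem_sup_left ⟨_, rfl⟩) (mem_sup_right ⟨_, mem_top _, rfl⟩)
    rw [← hsup]
    refine .sup ?_ (ih.map _)
    rw [show N = _ from SemidirectProduct.range_inl_eq_ker_rightHom, normalizer_eq_top]
    exact le_top
  | quot f hf _ ih =>
    rw [← map_top_of_surjective f hf]
    exact ih.map f

open scoped IsMulCommutative in
theorem of_isInternallySemiabelian [Finite X] (hX : IsPGroup p X) {H : Subgroup X}
    (hH : H.IsInternallySemiabelian) : IsSemiabelianP p H := by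
  induction hH with
  | bot => exact .quot (1 : PUnit →* (⊥ : Subgroup X)) (fun _ => ⟨(), Subsingleton.elim _ _⟩) .triv
  | @sup A K _ hK _ ih =>
    let f := SemidirectProduct.monoidHomSubgroup hK
    have : Finite (A ⋊[(normalizerMonoidHom A).comp (inclusion hK)] K) :=
      Finite.of_equiv _ SemidirectProduct.equivProd.symm
    have hf : f.range = A ⊔ K := by
      refine SetLike.coe_injective ?_
      rw [coe_mul_of_right_le_normalizer_left A K hK]
      ext x
      constructor
      · rintro ⟨y, rfl⟩
        exact ⟨y.left, y.left.2, y.right, y.right.2, rfl⟩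
      · rintro ⟨a, ha, k, hk, rfl⟩
        exact ⟨⟨⟨a, ha⟩, ⟨k, hk⟩⟩, rfl⟩
    rw [← hf]
    exact .quot f.rangeRestrict f.rangeRestrict_surjective
      (.sdp (hX.to_subgroup A) (hX.to_subgroup K) _ ih)

end IsSemiabelianP

section Decomposition

variable {p : ℕ} {G : Type} [Group G] {A H : Subgroup G}

theorem Subgroup.mul_eq_univ_iff_sup_eq_top [A.Normal] :
    (A : Set G) * (H : Set G) = Set.univ ↔ A ⊔ H = ⊤ := by
  rw [← normal_mul, coe_eq_univ]

theorem pPowComm_le [A.Normal] : pPowComm p A H ≤ A := by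
  rw [pPowComm, closure_le]
  rintro _ (⟨a, ha, rfl⟩ | ⟨a, ha, h, hh, rfl⟩)
  · exact pow_mem ha p
  · exact commutator_le_left A H (commutator_mem_commutator ha hh)

theorem IsDecomposition.normal_of_pPowComm_le (hd : IsDecomposition p A H) {D : Subgroup G}
    (hBD : pPowComm p A H ≤ D) (hDA : D ≤ A) : D.Normal := by
  have := hd.comm
  refine ⟨fun d hd' g => ?_⟩
  obtain ⟨a, ha, h, hh, rfl⟩ : g ∈ (A : Set G) * H := hd.prod ▸ Set.mem_univ g
  have hhd : h * d * h⁻¹ ∈ D := by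
    rw [show h * d * h⁻¹ = ⁅d, h⁆⁻¹ * d by group]
    exact mul_mem (inv_mem (hBD (subset_closure (Or.inr ⟨d, hDA hd', h, hh, rfl⟩)))) hd'
  rwa [show a * h * d * (a * h)⁻¹ = a * (h * d * h⁻¹) * a⁻¹ by group,
    setLike_mul_comm ha (hDA hhd), mul_inv_cancel_right]

namespace IsMinimalDecomposition

variable [Finite G] [Fact p.Prime]

theorem inf_le_pPowComm (hmin : IsMinimalDecomposition p A H) : A ⊓ H ≤ pPowComm p A H := by
  have := hmin.normal
  have := hmin.comm
  rintro x ⟨hxA, hxH⟩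
  by_contra hxB
  obtain ⟨E, hBE, hEA, hEF, hEA'⟩ := exists_inf_eq_and_sup_eq Fact.out
    (le_sup_left : pPowComm p A H ≤ _ ⊔ zpowers x) (sup_le pPowComm_le (zpowers_le.mpr hxA))
    fun a ha => subset_closure (Or.inl ⟨a, ha, rfl⟩)
  have hxE : x ∉ E := fun h => hxB (hEF ▸ ⟨h, mem_sup_right (mem_zpowers x)⟩)
  have := hmin.normal_of_pPowComm_le hBE hEA
  refine hmin.minA E (lt_of_le_of_ne hEA fun h => hxE (h ▸ hxA))
    ⟨H, ‹_›, .of_setLike_mul_comm fun a ha b hb => setLike_mul_comm (hEA ha) (hEA hb),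
      hmin.semi, hmin.proper, ?_⟩
  rw [mul_eq_univ_iff_sup_eq_top, eq_top_iff, ← mul_eq_univ_iff_sup_eq_top.mp hmin.prod]
  refine sup_le ?_ le_sup_right
  rw [← hEA']
  exact sup_le le_sup_left
    (sup_le (hBE.trans le_sup_left) ((zpowers_le.mpr hxH).trans le_sup_right))

open scoped IsMulCommutative in
theorem inf_le_map_frattini (hmin : IsMinimalDecomposition p A H) :
    A ⊓ H ≤ (frattini H).map H.subtype := by
  have := hmin.normal
  rintro x ⟨hxA, hxH⟩
  by_contra hx
  have hpH := hmin.semi.isPGroup_s6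
  have : IsMulCommutative (H ⧸ frattini H) :=
    Normal.quotient_commutative_iff_commutator_le.mpr hpH.commutator_le_frattini
  let π := QuotientGroup.mk' (frattini H)
  have hπ (q : H ⧸ frattini H) : q ^ p = 1 := by
    induction q using QuotientGroup.induction_on with
    | H a => rw [← QuotientGroup.mk_pow, QuotientGroup.eq_one_iff]; exact hpH.pow_mem_frattini a
  obtain ⟨K, -, hK, hcov, hdisj⟩ := hmin.semi.isInternallySemiabelian_top.exists_le_disjoint_map
    Fact.out hπ π ((A.subgroupOf H).map π)
  have hKtop : K ≠ ⊤ := by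
    rintro rfl
    have := hdisj.le_bot ⟨mem_map_of_mem π (mem_top ⟨x, hxH⟩),
      mem_map_of_mem π (show (⟨x, hxH⟩ : H) ∈ A.subgroupOf H from hxA)⟩
    exact hx ⟨_, (QuotientGroup.eq_one_iff _).mp this, rfl⟩
  have hCK : A.subgroupOf H ⊔ K = ⊤ := by
    apply frattini_nongenerating
    rw [← QuotientGroup.ker_mk' (frattini H), ← comap_map_eq, eq_top_iff, ← map_le_iff_le_comap,
      Subgroup.map_sup]
    exact hcov
  have hH : (⊤ : Subgroup H).map H.subtype = H := by rw [← MonoidHom.range_eq_map, range_subtype]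
  have hlt : K.map H.subtype < H :=
    ((map_lt_map_iff_of_injective H.subtype_injective).mpr hKtop.lt_top).trans_eq hH
  refine hmin.minH _ hlt ⟨.quot (K.equivMapOfInjective _ H.subtype_injective).toMonoidHom
    (MulEquiv.surjective _) (.of_isInternallySemiabelian hpH hK), ?_⟩
  rw [mul_eq_univ_iff_sup_eq_top, eq_top_iff, ← mul_eq_univ_iff_sup_eq_top.mp hmin.prod]
  refine sup_le le_sup_left (hH.symm.le.trans ?_)
  rw [← hCK, Subgroup.map_sup, subgroupOf_map_subtype]
  exact sup_le_sup_right inf_le_left _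

end IsMinimalDecomposition

end Decomposition

theorem inf_le_of_minimalDecomposition_general (p : ℕ) [Fact p.Prime] (G : Type) [Group G]
    [Finite G] (A H : Subgroup G)
    (hmin : IsMinimalDecomposition p A H) :
    A ⊓ H ≤ pPowComm p A H ⊓ (frattini ↥H).map H.subtype :=
  le_inf hmin.inf_le_pPowComm hmin.inf_le_map_frattini

/-- For a minimal decomposition `G = AH` of a semiabelian `p`-group,
`A ∩ H ⊆ A^p[A,H] ∩ Φ(H)`. -/
theorem inf_le_of_minimalDecomposition (p : ℕ) [Fact p.Prime] (G : Type) [Group G]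
    [Finite G] (hG : IsSemiabelianP p G) (A H : Subgroup G)
    (hmin : IsMinimalDecomposition p A H) :
    A ⊓ H ≤ pPowComm p A H ⊓ (frattini ↥H).map H.subtype :=
  inf_le_of_minimalDecomposition_general p G A H hmin
end

section
/- Let A be an abelian group and ψ: G → H an epimorphism of finite groups. Then the map ψ̃: A ≀ G → A ≀ H defined by ψ̃(f,g) = (ψ̂(f), ψ(g)), where ψ̂(f)(h) = ∏_{k ∈ ψ^{-1}(h)} f(k), is a group epimorphism. -/
open scoped Pointwise

/-- The right-translation action of `B` on `B → A`: `(b • f) x = f (x * b)`. -/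
def wreathAction (A B : Type) [Group A] [Group B] : B →* MulAut (B → A) where
  toFun b :=
    { toFun := fun f x => f (x * b)
      invFun := fun f x => f (x * b⁻¹)
      left_inv := fun f => by funext x; simp [mul_assoc]
      right_inv := fun f => by funext x; simp [mul_assoc]
      map_mul' := fun f g => rfl }
  map_one' := by
    apply MulEquiv.ext; intro f; funext x; simp
  map_mul' := fun b₁ b₂ => by
    apply MulEquiv.ext; intro f; funext x; simp [mul_assoc]

/-- The regular wreath product `A ≀ B`: pairs `(f, b)` with `f : B → A`, `b : B`,
with multiplication `(f₁, b₁)(f₂, b₂) = (f₁ · f₂^{b₁⁻¹}, b₁ b₂)` where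
`f₂^{b₁⁻¹}(x) = f₂ (x b₁)`. -/
abbrev Wreath (A B : Type) [Group A] [Group B] : Type :=
  (B → A) ⋊[wreathAction A B] B

/-- An epimorphism `ψ : G → H` induces an epimorphism `A ≀ G → A ≀ H`,
`(f, g) ↦ (ψ̂ f, ψ g)` where `ψ̂ f (h) = ∏_{k ∈ ψ⁻¹(h)} f k`. -/
theorem wreath_epimorphism_of_epimorphism (A G H : Type) [CommGroup A] [Group G]
    [Group H] [Fintype G] [Finite H] [DecidableEq H]
    (ψ : G →* H) (hψ : Function.Surjective ψ) :
    ∃ Ψ : Wreath A G →* Wreath A H,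
      (∀ (f : G → A) (g : G),
        Ψ ⟨f, g⟩ = ⟨fun h => ∏ k ∈ Finset.univ.filter (fun k => ψ k = h), f k, ψ g⟩) ∧
      Function.Surjective Ψ := by
  classical
  set Φ : (G → A) →* (H → A) :=
    { toFun := fun f h => ∏ k ∈ Finset.univ.filter (fun k => ψ k = h), f k
      map_one' := by funext h; simp
      map_mul' := fun f g => by funext h; simp [Finset.prod_mul_distrib] }
  have key : ∀ (g : G) (f : G → A),
      Φ (wreathAction A G g f) = wreathAction A H (ψ g) (Φ f) := by
    intro g f
    funext h
    show ∏ k ∈ Finset.univ.filter (fun k => ψ k = h), f (k * g)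
        = ∏ k ∈ Finset.univ.filter (fun k => ψ k = h * ψ g), f k
    refine Finset.prod_bij (fun k _ => k * g) ?_ ?_ ?_ ?_
    · intro k hk
      simp only [Finset.mem_filter, Finset.mem_univ, true_and] at hk ⊢
      rw [map_mul, hk]
    · intro a _ b _ hab
      exact mul_right_cancel hab
    · intro b hb
      simp only [Finset.mem_filter, Finset.mem_univ, true_and] at hb
      refine ⟨b * g⁻¹, ?_, by simp⟩
      simp only [Finset.mem_filter, Finset.mem_univ, true_and, map_mul, map_inv, hb]
      group
    · intro a _; rfl
  refine ⟨{ toFun := fun p => ⟨Φ p.left, ψ p.right⟩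
            map_one' := by
              simp only [SemidirectProduct.one_left, SemidirectProduct.one_right,
                map_one]; rfl
            map_mul' := fun p q => by
              ext
              · simp [SemidirectProduct.mul_left, map_mul, key]
              · simp [SemidirectProduct.mul_right, map_mul] }, ?_, ?_⟩
  · intro f g; rfl
  · rintro ⟨F, h⟩
    obtain ⟨g, hg⟩ := hψ h
    -- choose a section
    have sect : ∀ x : H, ∃ k : G, ψ k = x := hψ
    choose s hs using sect
    refine ⟨⟨fun k => if k = s (ψ k) then F (ψ k) else 1, g⟩, ?_⟩
    have hF : Φ (fun k => if k = s (ψ k) then F (ψ k) else 1) = F := by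
      funext x
      show ∏ k ∈ Finset.univ.filter (fun k => ψ k = x),
          (if k = s (ψ k) then F (ψ k) else 1) = F x
      rw [Finset.prod_eq_single (s x)]
      · simp [hs]
      · intro b hb hbne
        simp only [Finset.mem_filter, Finset.mem_univ, true_and] at hb
        rw [hb]
        simp [hbne, hb]
      · intro hns
        exfalso; apply hns
        simp [hs]
    ext
    · exact congrFun hF _
    · exact hg
end

section
/- Let G be a semiabelian p-group with d(G) = r. Then there is a chain of semiabelian subgroups {e} ≤ H_1 ≤ H_2 ≤ ... ≤ H_r = G with d(H_i) = i for each i. -/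
open scoped Pointwise

/-!
A nontrivial semiabelian `p`-group `G` is `A ⊔ U` with `A` normal abelian and `U` a proper
semiabelian subgroup. For `N ≤ A` normal in `G`, the group `N ⊔ U` is a quotient of `N ⋊ U`, hence
semiabelian. Adjoining the elements of `A` to `U` one at a time, through their normal closures,
raises the rank by at most one per step, because all conjugates of `a ∈ A` are already conjugates
by `U`. So every rank between `d(U)` and `d(G)` is attained; smaller ranks are attained inside `U`
by induction on `|G|`. The chain is then built from the top: a semiabelian subgroup of rank
`d(G) - 1`, and recursively a chain inside it.
-/

instance SemidirectProduct.instFinite {N G : Type*} [Group N] [Group G] [Finite N] [Finite G]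
    {φ : G →* MulAut N} : Finite (N ⋊[φ] G) :=
  Finite.of_equiv _ SemidirectProduct.equivProd.symm

namespace SemidirectProduct

variable {N G H : Type*} [Group N] [Group G] [Group H] {φ : G →* MulAut N}

theorem range_inl_sup_range_inr_s13 : (inl : N →* N ⋊[φ] G).range ⊔ inr.range = ⊤ :=
  eq_top_iff.2 fun x _ ↦ inl_left_mul_inr_right x ▸
    mul_mem (Subgroup.mem_sup_left ⟨x.left, rfl⟩) (Subgroup.mem_sup_right ⟨x.right, rfl⟩)

theorem range_eq_range_comp_inl_sup_range_comp_inr (f : N ⋊[φ] G →* H) :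
    f.range = (f.comp inl).range ⊔ (f.comp inr).range := by
  rw [MonoidHom.range_comp, MonoidHom.range_comp, ← Subgroup.map_sup, range_inl_sup_range_inr_s13,
    MonoidHom.range_eq_map]

end SemidirectProduct

namespace IsSemiabelianP

variable {p : ℕ}

theorem of_mulEquiv {G₁ G₂ : Type} [Group G₁] [Group G₂] [Finite G₁]
    (h : IsSemiabelianP p G₁) (e : G₁ ≃* G₂) : IsSemiabelianP p G₂ :=
  quot e.toMonoidHom e.surjective h

theorem range {G₁ G₂ : Type} [Group G₁] [Group G₂] [Finite G₁]
    (h : IsSemiabelianP p G₁) (f : G₁ →* G₂) : IsSemiabelianP p f.range :=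
  quot f.rangeRestrict f.rangeRestrict_surjective h

theorem top {G : Type} [Group G] [Finite G] (h : IsSemiabelianP p G) :
    IsSemiabelianP p (⊤ : Subgroup G) :=
  h.of_mulEquiv Subgroup.topEquiv.symm

theorem map_subtype {G : Type} [Group G] [Finite G] {K : Subgroup G} {H : Subgroup K}
    (h : IsSemiabelianP p H) : IsSemiabelianP p (H.map K.subtype) :=
  h.of_mulEquiv (H.equivMapOfInjective _ K.subtype_injective)

theorem subsingleton_or_exists_sup_eq_top_of_surjective {G₁ G₂ : Type} [Group G₁] [Group G₂]
    (h : IsSemiabelianP p G₁) (f : G₁ →* G₂) (hf : Function.Surjective f) :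
    Subsingleton G₂ ∨ ∃ A U : Subgroup G₂, A.Normal ∧ IsMulCommutative A ∧
      IsSemiabelianP p U ∧ U ≠ ⊤ ∧ A ⊔ U = ⊤ := by
  induction h generalizing G₂ with
  | triv => exact .inl hf.subsingleton
  | @sdp A H _ _ _ _ _ _ φ hH ih =>
    open SemidirectProduct in
    by_cases hU : (f.comp inr).range = ⊤
    · exact ih _ (MonoidHom.range_eq_top.1 hU)
    refine .inr ⟨(f.comp inl).range, (f.comp inr).range, ?_, ?_, hH.range _, hU, ?_⟩
    · rw [MonoidHom.range_comp, range_inl_eq_ker_rightHom]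
      exact (MonoidHom.normal_ker _).map f hf
    · refine .of_setLike_mul_comm ?_
      rintro _ ⟨a, rfl⟩ _ ⟨b, rfl⟩
      rw [← map_mul, ← map_mul, mul_comm]
    · rw [← range_eq_range_comp_inl_sup_range_comp_inr, MonoidHom.range_eq_top.2 hf]
  | quot g hg _ ih => exact ih (f.comp g) (hf.comp hg)

open IsMulCommutative in
theorem sup_of_normal_left {G : Type} [Group G] [Finite G] (hG : IsPGroup p G) {N U : Subgroup G}
    [N.Normal] [IsMulCommutative N] (hU : IsSemiabelianP p U) : IsSemiabelianP p ↥(N ⊔ U) := by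
  have hUN : U ≤ Subgroup.normalizer (N : Set G) := Subgroup.subset_normalizer_of_normal
  have hrange : (SemidirectProduct.monoidHomSubgroup hUN).range = N ⊔ U := by
    rw [SemidirectProduct.range_eq_range_comp_inl_sup_range_comp_inr,
      SemidirectProduct.monoidHomSubgroup, SemidirectProduct.lift_comp_inl,
      SemidirectProduct.lift_comp_inr, Subgroup.range_subtype, Subgroup.range_subtype]
  exact hrange ▸ (sdp (hG.to_subgroup N) (hG.to_subgroup U) _ hU).range _

end IsSemiabelianP

namespace Subgroup

variable {G : Type*} [Group G]

theorem rank_top [Group.FG G] : Group.rank (⊤ : Subgroup G) = Group.rank G :=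
  Group.rank_congr topEquiv

theorem rank_map_subtype [Finite G] {K : Subgroup G} (H : Subgroup K) :
    Group.rank ↥(H.map K.subtype) = Group.rank H :=
  (Group.rank_congr (H.equivMapOfInjective _ K.subtype_injective)).symm

theorem rank_sup_closure_singleton_le [Finite G] (K : Subgroup G) (a : G) :
    Group.rank ↥(K ⊔ closure {a}) ≤ Group.rank K + 1 := by
  classical
  obtain ⟨S, hS, hSK⟩ := Group.rank_spec K
  have hK : closure ((S.image K.subtype : Finset G) : Set G) = K := by
    rw [Finset.coe_image, ← MonoidHom.map_closure, hSK, ← MonoidHom.range_eq_map, range_subtype]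
  have hsup : K ⊔ closure {a} = closure ((insert a (S.image K.subtype) : Finset G) : Set G) := by
    rw [Finset.coe_insert, Set.insert_eq, closure_union, hK, sup_comm]
  calc Group.rank ↥(K ⊔ closure {a})
      ≤ (insert a (S.image K.subtype)).card := rank_congr hsup ▸ rank_closure_finset_le_card _
    _ ≤ (S.image K.subtype).card + 1 := Finset.card_insert_le _ _
    _ ≤ Group.rank K + 1 := by rw [← hS]; exact Nat.add_le_add_right Finset.card_image_le 1

variable {A U : Subgroup G} [A.Normal] [IsMulCommutative A]

theorem normalClosure_singleton_sup_eq (hAU : A ⊔ U = ⊤) {a : G} (ha : a ∈ A) :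
    normalClosure {a} ⊔ U = closure {a} ⊔ U := by
  refine le_antisymm (sup_le ?_ le_sup_right)
    (sup_le_sup_right (closure_le_normalClosure (s := {a})) U)
  refine (closure_le _).2 fun x hx ↦ ?_
  obtain ⟨b, rfl, hconj⟩ := Group.mem_conjugatesOfSet_iff.1 hx
  obtain ⟨c, rfl⟩ := isConj_iff.1 hconj
  obtain ⟨u, hu, y, hy, rfl⟩ : c ∈ (U : Set G) * A := by
    rw [← mul_normal, sup_comm, hAU]; exact mem_top c
  -- `y` commutes with `b`, so conjugating `b` by `u * y` is conjugating it by `u`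
  have hyb : y * b * y⁻¹ = b := by rw [setLike_mul_comm hy ha, mul_inv_cancel_right]
  rw [show u * y * b * (u * y)⁻¹ = u * (y * b * y⁻¹) * u⁻¹ by group, hyb]
  exact mul_mem (mul_mem (mem_sup_right hu) (mem_sup_left (subset_closure rfl)))
    (inv_mem (mem_sup_right hu))

theorem rank_normalClosure_insert_sup_le [Finite G] (hAU : A ⊔ U = ⊤) (s : Set G) {a : G}
    (ha : a ∈ A) :
    Group.rank ↥(normalClosure (insert a s) ⊔ U) ≤ Group.rank ↥(normalClosure s ⊔ U) + 1 := by
  have h : normalClosure (insert a s) ⊔ U = normalClosure s ⊔ U ⊔ closure {a} := calc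
    _ = normalClosure s ⊔ (normalClosure {a} ⊔ U) := by
      rw [Set.insert_eq, normalClosure_union]; ac_rfl
    _ = _ := by rw [normalClosure_singleton_sup_eq hAU ha]; ac_rfl
  exact rank_congr h ▸ rank_sup_closure_singleton_le _ a

theorem exists_subset_rank_normalClosure_sup_eq [Finite G] (hAU : A ⊔ U = ⊤) (s : Finset G)
    (hs : ↑s ⊆ (A : Set G)) {k : ℕ} (hUk : Group.rank U ≤ k)
    (hk : k ≤ Group.rank ↥(normalClosure ↑s ⊔ U)) :
    ∃ t ⊆ s, Group.rank ↥(normalClosure ↑t ⊔ U) = k := by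
  classical
  induction s using Finset.induction_on with
  | empty =>
    have hU : normalClosure ↑(∅ : Finset G) ⊔ U = U := by
      rw [Finset.coe_empty, normalClosure_empty, bot_sup_eq]
    rw [rank_congr hU] at hk
    exact ⟨∅, subset_rfl, by rw [rank_congr hU]; omega⟩
  | insert a s _ ih =>
    rw [Finset.coe_insert, Set.insert_subset_iff] at hs
    by_cases hks : k ≤ Group.rank ↥(normalClosure ↑s ⊔ U)
    · obtain ⟨t, hts, ht⟩ := ih hs.2 hks
      exact ⟨t, hts.trans (Finset.subset_insert a s), ht⟩
    · have := rank_normalClosure_insert_sup_le hAU s hs.1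
      exact ⟨insert a s, subset_rfl, by rw [Finset.coe_insert] at hk ⊢; omega⟩

end Subgroup

open Subgroup in
theorem IsSemiabelianP.exists_subgroup_rank_eq {p : ℕ} {G : Type} [Group G] [Finite G]
    (hG : IsSemiabelianP p G) {k : ℕ} (hk : k ≤ Group.rank G) :
    ∃ H : Subgroup G, IsSemiabelianP p H ∧ Group.rank H = k := by
  induction hn : Nat.card G using Nat.strong_induction_on generalizing G with
  | _ n ih =>
  rcases hk.eq_or_lt with rfl | hlt
  · exact ⟨⊤, hG.top, Subgroup.rank_top⟩
  obtain hsub | ⟨A, U, hA, hAc, hU, hUG, hAU⟩ :=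
    hG.subsingleton_or_exists_sup_eq_top_of_surjective (.id G) Function.surjective_id
  · rw [Group.rank_eq_zero G] at hlt; omega
  by_cases hkU : k ≤ Group.rank U
  · have hUn : Nat.card U < n :=
      hn ▸ (card_le_card_group U).lt_of_ne (mt (card_eq_iff_eq_top U).1 hUG)
    obtain ⟨H, hH, hHk⟩ := ih _ hUn hU hkU rfl
    exact ⟨H.map U.subtype, hH.map_subtype, (rank_map_subtype H).trans hHk⟩
  · have hAU' : normalClosure ↑(Set.toFinite (A : Set G)).toFinset ⊔ U = ⊤ := by
      rw [Set.Finite.coe_toFinset, normalClosure_eq_self, hAU]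
    obtain ⟨t, hts, ht⟩ := exists_subset_rank_normalClosure_sup_eq hAU _
      (Set.Finite.coe_toFinset _).subset (not_le.1 hkU).le
      (by rw [rank_congr hAU', Subgroup.rank_top]; exact hlt.le)
    have htA : normalClosure ↑t ≤ A :=
      normalClosure_le_normal fun x hx ↦ (Set.Finite.mem_toFinset _).1 (hts hx)
    have : IsMulCommutative (normalClosure (t : Set G)) :=
      .of_setLike_mul_comm fun x hx y hy ↦ setLike_mul_comm (htA hx) (htA hy)
    exact ⟨_, hU.sup_of_normal_left hG.isPGroup, ht⟩

def IsSemiabelianRankChain (p : ℕ) {G : Type} [Group G] [Finite G] {r : ℕ}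
    (H : Fin (r + 1) → Subgroup G) : Prop :=
  Monotone H ∧ H 0 = ⊥ ∧ H (Fin.last r) = ⊤ ∧ (∀ i, IsSemiabelianP p ↥(H i)) ∧
    ∀ i : Fin (r + 1), Group.rank ↥(H i) = (i : ℕ)

namespace IsSemiabelianRankChain

variable {p : ℕ} {G : Type} [Group G] [Finite G]

theorem const_top (hG : IsSemiabelianP p G) (hr : Group.rank G = 0) :
    IsSemiabelianRankChain p fun _ : Fin 1 ↦ (⊤ : Subgroup G) := by
  have := Group.rank_eq_zero_iff.1 hr
  refine ⟨monotone_const, Subsingleton.elim _ _, rfl, fun _ ↦ hG.top, fun i ↦ ?_⟩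
  rw [Fin.fin_one_eq_zero i, Subgroup.rank_top, hr, Fin.val_zero]

theorem snoc {r : ℕ} {X : Subgroup G} {C : Fin (r + 1) → Subgroup X}
    (hC : IsSemiabelianRankChain p C) (hG : IsSemiabelianP p G) (hr : Group.rank G = r + 1) :
    IsSemiabelianRankChain p
      (Fin.snoc (α := fun _ ↦ Subgroup G) (fun i ↦ (C i).map X.subtype) ⊤) := by
  obtain ⟨hmono, hbot, -, hsemi, hrank⟩ := hC
  refine ⟨?_, ?_, Fin.snoc_last _ _, Fin.lastCases ?_ fun i ↦ ?_, Fin.lastCases ?_ fun i ↦ ?_⟩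
  · intro i j hij
    cases j using Fin.lastCases with
    | last => rw [Fin.snoc_last]; exact le_top
    | cast j =>
      cases i using Fin.lastCases with
      | last => exact absurd hij (not_le.2 (Fin.castSucc_lt_last j))
      | cast i =>
        simp only [Fin.snoc_castSucc]
        exact Subgroup.map_mono (hmono (Fin.castSucc_le_castSucc_iff.1 hij))
  · rw [← Fin.castSucc_zero, Fin.snoc_castSucc, hbot, Subgroup.map_bot]
  · rw [Fin.snoc_last]; exact hG.top
  · rw [Fin.snoc_castSucc]; exact (hsemi i).map_subtype
  · rw [Subgroup.rank_congr (Fin.snoc_last _ _), Subgroup.rank_top, hr, Fin.val_last]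
  · rw [Subgroup.rank_congr (Fin.snoc_castSucc _ _ _), Subgroup.rank_map_subtype, hrank,
      Fin.val_castSucc]

end IsSemiabelianRankChain

theorem exists_chain_of_semiabelian_subgroups_general (p : ℕ) (G : Type)
    [Group G] [Finite G] (hG : IsSemiabelianP p G) (r : ℕ) (hr : Group.rank G = r) :
    ∃ H : Fin (r + 1) → Subgroup G,
      Monotone H ∧ H 0 = ⊥ ∧ H (Fin.last r) = ⊤ ∧
      (∀ i, IsSemiabelianP p ↥(H i)) ∧
      ∀ i : Fin (r + 1), Group.rank ↥(H i) = (i : ℕ) := by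
  induction r generalizing G with
  | zero => exact ⟨_, IsSemiabelianRankChain.const_top hG hr⟩
  | succ r ih =>
    obtain ⟨X, hX, hXr⟩ := hG.exists_subgroup_rank_eq (k := r) (by omega)
    obtain ⟨C, hC⟩ := ih X hX hXr
    exact ⟨_, IsSemiabelianRankChain.snoc hC hG hr⟩

/-- A semiabelian `p`-group of rank `r` has a chain of semiabelian subgroups
`{e} ≤ H₁ ≤ ⋯ ≤ H_r = G` with `d(H_i) = i`. -/
theorem exists_chain_of_semiabelian_subgroups (p : ℕ) [Fact p.Prime] (G : Type)
    [Group G] [Finite G] (hG : IsSemiabelianP p G) (r : ℕ) (hr : Group.rank G = r) :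
    ∃ H : Fin (r + 1) → Subgroup G,
      Monotone H ∧ H 0 = ⊥ ∧ H (Fin.last r) = ⊤ ∧
      (∀ i, IsSemiabelianP p ↥(H i)) ∧
      ∀ i : Fin (r + 1), Group.rank ↥(H i) = (i : ℕ) :=
  exists_chain_of_semiabelian_subgroups_general p G hG r hr
end
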